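/- arXiv:2502.07933 — 7 statements merged into one kernel-verified Lean document; each statement's English description precedes it below -/
import Mathlib

section
/- If the skeleton of a digraph D is bipartite, then the arcs of D can be partitioned into at most 2 classes, each inducing a weak locally irregular subdigraph. -/
/-! Colour every arc by the colour of its tail in a proper 2-colouring of the skeleton. Within a
colour class no vertex is both a tail and a head, so tails have positive outdegree while heads
have outdegree zero. -/

/- A digraph on vertex set `V` is given by its finite arc set `E ⊆ V × V`
(arcs in both directions between two vertices are allowed, loops are excluded
via explicit hypotheses). -/

/-- The outdegree of a vertex. -/
def outdeg {V : Type*} [DecidableEq V] (E : Finset (V × V)) (v : V) : ℕ :=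
  (E.filter fun a => a.1 = v).card

/-- The indegree of a vertex. -/
def indeg {V : Type*} [DecidableEq V] (E : Finset (V × V)) (v : V) : ℕ :=
  (E.filter fun a => a.2 = v).card

/-- The balanced degree of a vertex. -/
def bdeg {V : Type*} [DecidableEq V] (E : Finset (V × V)) (v : V) : ℤ :=
  (outdeg E v : ℤ) - (indeg E v : ℤ)

/-- A digraph is weak locally irregular if the endpoints of every arc have
different outdegree-indegree pairs. -/
def WeakLI {V : Type*} [DecidableEq V] (E : Finset (V × V)) : Prop :=
  ∀ a ∈ E, (outdeg E a.1, indeg E a.1) ≠ (outdeg E a.2, indeg E a.2)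

/-- A digraph is strong locally irregular if the endpoints of every arc have
different balanced degrees. -/
def StrongLI {V : Type*} [DecidableEq V] (E : Finset (V × V)) : Prop :=
  ∀ a ∈ E, bdeg E a.1 ≠ bdeg E a.2

/-- `lirLe E n` : the arcs of `E` admit a coloring with at most `n` colors in
which every color class induces a weak locally irregular digraph. -/
def lirLe {V : Type*} [DecidableEq V] (E : Finset (V × V)) (n : ℕ) : Prop :=
  ∃ c : V × V → Fin n, ∀ i : Fin n, WeakLI (E.filter fun a => c a = i)

/-- `slirLe E n` : the arcs of `E` admit a coloring with at most `n` colors in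
which every color class induces a strong locally irregular digraph. -/
def slirLe {V : Type*} [DecidableEq V] (E : Finset (V × V)) (n : ℕ) : Prop :=
  ∃ c : V × V → Fin n, ∀ i : Fin n, StrongLI (E.filter fun a => c a = i)

/-- The skeleton of a digraph: the simple graph obtained by replacing each arc
or pair of opposite arcs with a single edge. -/
def skeleton {V : Type*} [DecidableEq V] (E : Finset (V × V)) : SimpleGraph V where
  Adj u v := u ≠ v ∧ ((u, v) ∈ E ∨ (v, u) ∈ E)
  symm := by
    constructor
    intro u v h
    exact ⟨h.1.symm, h.2.elim Or.inr Or.inl⟩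
  loopless := by
    constructor
    intro v h
    exact h.1 rfl

/-- `E'` is an orientation of the simple graph `G`: its arcs lie on edges of `G`
and every edge of `G` receives exactly one direction. -/
def IsOrientationOf {V : Type*} [DecidableEq V] (E' : Finset (V × V))
    (G : SimpleGraph V) : Prop :=
  (∀ a ∈ E', G.Adj a.1 a.2) ∧ (∀ u v : V, G.Adj u v → ((u, v) ∈ E' ↔ (v, u) ∉ E'))

/-- An outdegree-decreasing acyclic digraph: vertices can be linearly ordered so
that every arc goes forward and outdegrees are nonincreasing along the order. -/
def OutdegDecAcyclic {V : Type*} [DecidableEq V] (E : Finset (V × V)) : Prop :=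
  ∃ r : V → ℕ, Function.Injective r ∧ (∀ a ∈ E, r a.1 ≤ r a.2) ∧
    ∀ u v : V, r u < r v → outdeg E v ≤ outdeg E u

/-- An indegree-increasing acyclic digraph: vertices can be linearly ordered so
that every arc goes backward and indegrees are nondecreasing along the order. -/
def IndegIncAcyclic {V : Type*} [DecidableEq V] (E : Finset (V × V)) : Prop :=
  ∃ r : V → ℕ, Function.Injective r ∧ (∀ a ∈ E, r a.2 ≤ r a.1) ∧
    ∀ u v : V, r u ≤ r v → indeg E u ≤ indeg E v

section

variable {V : Type*} [DecidableEq V] {E : Finset (V × V)}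

theorem outdeg_pos_of_mem {a : V × V} (ha : a ∈ E) : 0 < outdeg E a.1 :=
  Finset.card_pos.mpr ⟨a, Finset.mem_filter.mpr ⟨ha, rfl⟩⟩

theorem outdeg_eq_zero_iff {v : V} : outdeg E v = 0 ↔ ∀ a ∈ E, a.1 ≠ v := by
  rw [outdeg, Finset.card_eq_zero, Finset.filter_eq_empty_iff]

theorem weakLI_of_forall_tail_ne_head (h : ∀ a ∈ E, ∀ b ∈ E, a.1 ≠ b.2) : WeakLI E := by
  intro a ha heq
  have hhead : outdeg E a.2 = 0 := outdeg_eq_zero_iff.mpr fun b hb => h b hb a ha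
  exact (outdeg_pos_of_mem ha).ne' ((Prod.mk.inj heq).1.trans hhead)

theorem skeleton_adj_of_mem (hloop : ∀ v : V, (v, v) ∉ E) {u v : V}
    (huv : (u, v) ∈ E) : (skeleton E).Adj u v :=
  ⟨by rintro rfl; exact hloop u huv, Or.inl huv⟩

end

theorem stmt0 {V : Type*} [DecidableEq V] (E : Finset (V × V))
    (hloop : ∀ v : V, (v, v) ∉ E)
    (hbip : (skeleton E).Colorable 2) :
    lirLe E 2 := by
  obtain ⟨C⟩ := hbip
  refine ⟨fun a => C a.1, fun i => weakLI_of_forall_tail_ne_head ?_⟩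
  simp only [Finset.mem_filter]
  rintro a ⟨-, rfl⟩ b ⟨hb, hbi⟩ htail
  exact C.valid (skeleton_adj_of_mem hloop hb) (hbi.trans (congrArg C htail))
end

section
/- Let G be the skeleton of a digraph D. If every orientation D' of G satisfies lir(D') ≤ k, then lir(D) ≤ k+1. -/
/-! The arcs of `E` lying on a 2-cycle form a symmetric loopless arc set `S`. By the theorem of
Borowiecki, Grytczuk and Pilśniak, `S` contains an orientation `F` of its underlying graph in
which adjacent vertices have different indegrees; `F` is then weak locally irregular and receives
one new color. What remains, `E \ F`, has exactly one arc on each edge of the skeleton, so it is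
an orientation of the skeleton and is colored with `k` colors by hypothesis.

For the Borowiecki–Grytczuk–Pilśniak theorem, pick a vertex `v` of maximum indegree in `S`,
orient the arcs avoiding `v` inductively and direct every arc at `v` into `v`. A neighbour `x`
of `v` then has indegree at most `indeg S' x < indeg S x ≤ indeg S v`, where `S'` is `S` with
`v` deleted. -/

section Indegree

variable {V : Type*} [DecidableEq V]

lemma indeg_mono {F S : Finset (V × V)} (h : F ⊆ S) (v : V) : indeg F v ≤ indeg S v :=
  Finset.card_le_card (Finset.filter_subset_filter _ h)

lemma indeg_lt_indeg_of_mem_sdiff {F S : Finset (V × V)} (h : F ⊆ S) {a : V × V}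
    (ha : a ∈ S) (haF : a ∉ F) : indeg F a.2 < indeg S a.2 :=
  Finset.card_lt_card ⟨Finset.filter_subset_filter _ h, fun hS => haF
    (Finset.mem_filter.mp (hS (Finset.mem_filter.mpr ⟨ha, rfl⟩))).1⟩

lemma indeg_union_filter_snd_eq {F S : Finset (V × V)} {v : V} (hF : ∀ a ∈ F, a.2 ≠ v)
    (u : V) :
    indeg (F ∪ S.filter fun a => a.2 = v) u = if u = v then indeg S v else indeg F u := by
  unfold indeg
  split_ifs with hu <;> congr 1 <;> ext a <;>
    simp only [Finset.mem_filter, Finset.mem_union] <;> grind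

end Indegree

section Orientation

variable {V : Type*} [DecidableEq V] {S F : Finset (V × V)} {v : V}

lemma orients_union_filter_snd (hloop : ∀ u, (u, u) ∉ S) (hsymm : ∀ a ∈ S, a.swap ∈ S)
    (hF : F ⊆ S.filter fun a => a.1 ≠ v ∧ a.2 ≠ v)
    (hFor : ∀ a ∈ S.filter (fun a => a.1 ≠ v ∧ a.2 ≠ v), a ∈ F ↔ a.swap ∉ F) :
    ∀ a ∈ S, a ∈ F ∪ S.filter (fun a => a.2 = v) ↔
      a.swap ∉ F ∪ S.filter (fun a => a.2 = v) := by
  rintro ⟨x, y⟩ ha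
  have hxy : x ≠ y := fun h => hloop x (h ▸ ha)
  have hF' : ∀ b ∈ F, b.1 ≠ v ∧ b.2 ≠ v := fun b hb => (Finset.mem_filter.mp (hF hb)).2
  have hyx : (y, x) ∈ S := hsymm _ ha
  have hxyF := hFor (x, y)
  simp only [Finset.mem_union, Finset.mem_filter, Prod.swap_prod_mk] at hxyF ⊢
  grind

lemma indeg_ne_of_mem_union_filter_snd (hloop : ∀ u, (u, u) ∉ S)
    (hsymm : ∀ a ∈ S, a.swap ∈ S)
    (hv : ∀ a ∈ S, indeg S a.2 ≤ indeg S v)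
    (hF : F ⊆ S.filter fun a => a.1 ≠ v ∧ a.2 ≠ v)
    (hFind : ∀ a ∈ F, indeg F a.1 ≠ indeg F a.2) :
    ∀ a ∈ F ∪ S.filter (fun a => a.2 = v),
      indeg (F ∪ S.filter (fun a => a.2 = v)) a.1 ≠
        indeg (F ∪ S.filter (fun a => a.2 = v)) a.2 := by
  have hF' : ∀ b ∈ F, b.1 ≠ v ∧ b.2 ≠ v := fun b hb => (Finset.mem_filter.mp (hF hb)).2
  rintro ⟨x, y⟩ ha
  simp only [indeg_union_filter_snd_eq fun b hb => (hF' b hb).2]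
  rcases Finset.mem_union.mp ha with ha | ha
  · simpa [(hF' _ ha).1, (hF' _ ha).2] using hFind _ ha
  · obtain ⟨haS, hyv : y = v⟩ := Finset.mem_filter.mp ha
    subst hyv
    have hxy : x ≠ y := fun h => hloop x (h ▸ haS)
    rw [if_neg hxy, if_pos rfl]
    have hyx : (y, x) ∈ S := hsymm _ haS
    have hyxF : (y, x) ∉ Finset.filter (fun a => a.1 ≠ y ∧ a.2 ≠ y) S := by simp
    refine ne_of_lt ?_
    calc indeg F x ≤ indeg (S.filter fun a => a.1 ≠ y ∧ a.2 ≠ y) x := indeg_mono hF x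
      _ < indeg S x := indeg_lt_indeg_of_mem_sdiff (Finset.filter_subset _ _) hyx hyxF
      _ ≤ indeg S y := hv _ hyx

end Orientation

theorem exists_orientation_indeg_ne {V : Type*} [DecidableEq V] (S : Finset (V × V))
    (hloop : ∀ v, (v, v) ∉ S) (hsymm : ∀ a ∈ S, a.swap ∈ S) :
    ∃ F ⊆ S, (∀ a ∈ S, a ∈ F ↔ a.swap ∉ F) ∧
      ∀ a ∈ F, indeg F a.1 ≠ indeg F a.2 := by
  induction S using Finset.strongInduction with
  | H S ih =>
  rcases S.eq_empty_or_nonempty with rfl | hne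
  · exact ⟨∅, subset_rfl, by simp, by simp⟩
  obtain ⟨a₀, ha₀, hmax⟩ := Finset.exists_max_image S (fun a => indeg S a.2) hne
  set S' := S.filter fun a => a.1 ≠ a₀.2 ∧ a.2 ≠ a₀.2
  have hS' : S' ⊂ S := Finset.filter_ssubset.mpr ⟨a₀, ha₀, by simp⟩
  obtain ⟨F, hFS', hFor, hFind⟩ := ih S' hS' (fun v hv => hloop v (hS'.subset hv))
    fun a ha => Finset.mem_filter.mpr ⟨hsymm a (Finset.mem_filter.mp ha).1,
      (Finset.mem_filter.mp ha).2.symm⟩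
  refine ⟨F ∪ S.filter (fun a => a.2 = a₀.2), ?_,
    orients_union_filter_snd hloop hsymm hFS' hFor,
    indeg_ne_of_mem_union_filter_snd hloop hsymm hmax hFS' hFind⟩
  exact Finset.union_subset (hFS'.trans hS'.subset) (Finset.filter_subset _ _)

section Coloring

variable {V : Type*} [DecidableEq V] {E F : Finset (V × V)}

lemma weakLI_of_indeg_ne (h : ∀ a ∈ F, indeg F a.1 ≠ indeg F a.2) : WeakLI F :=
  fun a ha hdeg => h a ha (congrArg Prod.snd hdeg)

lemma isOrientationOf_skeleton_sdiff (hloop : ∀ v, (v, v) ∉ E)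
    (hF : F ⊆ E.filter fun a => a.swap ∈ E)
    (hFor : ∀ a ∈ E.filter (fun a => a.swap ∈ E), a ∈ F ↔ a.swap ∉ F) :
    IsOrientationOf (E \ F) (skeleton E) := by
  refine ⟨fun ⟨x, y⟩ ha => ?_, fun u v huv => ?_⟩
  · have hxy : (x, y) ∈ E := (Finset.mem_sdiff.mp ha).1
    exact ⟨fun h => hloop x (by obtain rfl : x = y := h; exact hxy), Or.inl hxy⟩
  · have huvF := hFor (u, v)
    have hvuF := hFor (v, u)
    simp only [skeleton, Finset.mem_filter, Prod.swap_prod_mk] at huv huvF hvuF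
    simp only [Finset.mem_sdiff]
    grind

lemma lirLe_succ_of_weakLI_of_sdiff {k : ℕ} (hFE : F ⊆ E) (hF : WeakLI F)
    (hrest : lirLe (E \ F) k) : lirLe E (k + 1) := by
  obtain ⟨c, hc⟩ := hrest
  refine ⟨fun a => if a ∈ F then Fin.last k else (c a).castSucc, Fin.lastCases ?_ fun j => ?_⟩
  · convert hF using 1
    ext a
    simp only [Finset.mem_filter]
    split_ifs with ha
    · simpa [ha] using hFE ha
    · simp [ha, (Fin.castSucc_lt_last (c a)).ne]
  · convert hc j using 1
    ext a
    simp only [Finset.mem_filter, Finset.mem_sdiff]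
    split_ifs with ha
    · simp [ha, (Fin.castSucc_lt_last j).ne']
    · simp [ha]

end Coloring

theorem stmt7 {V : Type*} [DecidableEq V] (E : Finset (V × V))
    (hloop : ∀ v : V, (v, v) ∉ E) (k : ℕ)
    (h : ∀ E' : Finset (V × V), IsOrientationOf E' (skeleton E) → lirLe E' k) :
    lirLe E (k + 1) := by
  set S := E.filter fun a => a.swap ∈ E
  have hSE : S ⊆ E := Finset.filter_subset _ _
  obtain ⟨F, hFS, hFor, hFind⟩ := exists_orientation_indeg_ne S
    (fun v hv => hloop v (hSE hv))
    fun a ha => Finset.mem_filter.mpr ⟨(Finset.mem_filter.mp ha).2, by simpa using hSE ha⟩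
  exact lirLe_succ_of_weakLI_of_sdiff (hFS.trans hSE) (weakLI_of_indeg_ne hFind)
    (h _ (isOrientationOf_skeleton_sdiff hloop hFS hFor))
end

section
/- Every simple graph G admits an orientation in which adjacent vertices have different indegrees. -/
/-! Orient the edges at a vertex `v` of maximum degree towards `v` and recurse on the graph with
`v` deleted. Then `indeg v = deg v`, while every neighbour `u` of `v` has indegree at most its
degree after deleting `v`, that is `indeg u ≤ deg u - 1 < deg v`.
Since `V` may be infinite, degrees are counted inside a finite vertex set `W` containing every
non-isolated vertex, and the recursion runs over subsets of `W`. -/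

open Finset

lemma indeg_union {V : Type*} [DecidableEq V] {E F : Finset (V × V)} (h : Disjoint E F) (v : V) :
    indeg (E ∪ F) v = indeg E v + indeg F v := by
  rw [indeg, filter_union, card_union_of_disjoint (disjoint_filter_filter h)]
  rfl

namespace SimpleGraph

variable {V : Type*} [DecidableEq V] (G : SimpleGraph V)

def IsOrientationOn (W : Finset V) (E : Finset (V × V)) : Prop :=
  (∀ a ∈ E, a.1 ∈ W ∧ a.2 ∈ W ∧ G.Adj a.1 a.2) ∧
    ∀ u ∈ W, ∀ v ∈ W, G.Adj u v → ((u, v) ∈ E ↔ (v, u) ∉ E)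

variable {G} {W : Finset V} {v : V} {E : Finset (V × V)}

lemma IsOrientationOn.isOrientationOf (hE : G.IsOrientationOn W E)
    (hW : ∀ u v, G.Adj u v → u ∈ W) : IsOrientationOf E G :=
  ⟨fun a ha => (hE.1 a ha).2.2, fun u v huv => hE.2 u (hW u v huv) v (hW v u huv.symm) huv⟩

lemma IsOrientationOn.fst_ne_of_erase (hE : G.IsOrientationOn (W.erase v) E) {a : V × V}
    (ha : a ∈ E) : a.1 ≠ v :=
  ne_of_mem_erase (hE.1 a ha).1

lemma IsOrientationOn.snd_ne_of_erase (hE : G.IsOrientationOn (W.erase v) E) {a : V × V}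
    (ha : a ∈ E) : a.2 ≠ v :=
  ne_of_mem_erase (hE.1 a ha).2.1

variable (G) [DecidableRel G.Adj]

def degreeIn (W : Finset V) (v : V) : ℕ := #{w ∈ W | G.Adj v w}

def arcsInto (W : Finset V) (v : V) : Finset (V × V) := {w ∈ W | G.Adj w v}.image (·, v)

variable {G}

lemma mem_arcsInto {a : V × V} : a ∈ G.arcsInto W v ↔ a.1 ∈ W ∧ G.Adj a.1 v ∧ a.2 = v := by
  obtain ⟨x, y⟩ := a
  simp [arcsInto, eq_comm, and_assoc]

lemma degreeIn_erase_lt {u : V} (hv : v ∈ W) (huv : G.Adj u v) :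
    G.degreeIn (W.erase v) u < G.degreeIn W u := by
  rw [degreeIn, degreeIn, filter_erase]
  exact card_erase_lt_of_mem (mem_filter.2 ⟨hv, huv⟩)

lemma indeg_arcsInto_self : indeg (G.arcsInto W v) v = G.degreeIn W v := by
  rw [indeg, filter_true_of_mem fun a ha => (mem_arcsInto.1 ha).2.2, arcsInto,
    card_image_of_injective _ fun a b h => (Prod.ext_iff.1 h).1, degreeIn]
  simp only [G.adj_comm]

lemma indeg_arcsInto_of_ne {w : V} (hw : w ≠ v) : indeg (G.arcsInto W v) w = 0 :=
  card_eq_zero.2 <| filter_eq_empty_iff.2 fun _ ha h => hw (h.symm.trans (mem_arcsInto.1 ha).2.2)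

namespace IsOrientationOn

lemma indeg_le_degreeIn (hE : G.IsOrientationOn W E) (v : V) : indeg E v ≤ G.degreeIn W v := by
  refine card_le_card_of_injOn Prod.fst (fun a ha => ?_) (fun a ha b hb hab => ?_)
  · obtain ⟨haE, rfl⟩ := mem_filter.1 ha
    obtain ⟨hw, -, hadj⟩ := hE.1 a haE
    exact mem_filter.2 ⟨hw, hadj.symm⟩
  · exact Prod.ext hab ((mem_filter.1 ha).2.trans (mem_filter.1 hb).2.symm)

lemma union_arcsInto (hv : v ∈ W) (hE : G.IsOrientationOn (W.erase v) E) :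
    G.IsOrientationOn W (E ∪ G.arcsInto W v) := by
  refine ⟨fun a ha => ?_, fun u hu w hw huw => ?_⟩
  · rcases mem_union.1 ha with ha | ha
    · obtain ⟨h1, h2, hadj⟩ := hE.1 a ha
      exact ⟨mem_of_mem_erase h1, mem_of_mem_erase h2, hadj⟩
    · obtain ⟨h1, hadj, h2⟩ := mem_arcsInto.1 ha
      exact ⟨h1, h2 ▸ hv, h2 ▸ hadj⟩
  have hnotE : ∀ x, (v, x) ∉ E ∧ (x, v) ∉ E := fun x =>
    ⟨fun h => hE.fst_ne_of_erase h rfl, fun h => hE.snd_ne_of_erase h rfl⟩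
  simp only [mem_union, mem_arcsInto]
  by_cases hu' : u = v
  · subst hu'
    simp [hnotE, huw.ne', hw, huw.symm]
  by_cases hw' : w = v
  · subst hw'
    simp [hnotE, hu, huw]
  simpa [hu', hw'] using hE.2 u (mem_erase.2 ⟨hu', hu⟩) w (mem_erase.2 ⟨hw', hw⟩) huw

lemma disjoint_arcsInto (hE : G.IsOrientationOn (W.erase v) E) : Disjoint E (G.arcsInto W v) :=
  Finset.disjoint_left.2 fun _ ha hA => hE.snd_ne_of_erase ha (mem_arcsInto.1 hA).2.2

lemma indeg_union_arcsInto_self (hE : G.IsOrientationOn (W.erase v) E) :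
    indeg (E ∪ G.arcsInto W v) v = G.degreeIn W v := by
  rw [indeg_union hE.disjoint_arcsInto, indeg_arcsInto_self, indeg,
    card_eq_zero.2 (filter_eq_empty_iff.2 fun _ ha => hE.snd_ne_of_erase ha), zero_add]

lemma indeg_union_arcsInto_of_ne (hE : G.IsOrientationOn (W.erase v) E) {w : V} (hw : w ≠ v) :
    indeg (E ∪ G.arcsInto W v) w = indeg E w := by
  rw [indeg_union hE.disjoint_arcsInto, indeg_arcsInto_of_ne hw, add_zero]

end IsOrientationOn

variable (G)

theorem exists_isOrientationOn_indeg_ne (W : Finset V) :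
    ∃ E, G.IsOrientationOn W E ∧ ∀ u ∈ W, ∀ v ∈ W, G.Adj u v → indeg E u ≠ indeg E v := by
  induction W using Finset.strongInduction with
  | H W ih =>
  rcases W.eq_empty_or_nonempty with rfl | hW
  · exact ⟨∅, ⟨by simp, by simp⟩, by simp⟩
  obtain ⟨v, hv, hmax⟩ := W.exists_max_image (G.degreeIn W) hW
  obtain ⟨E, hE, hirr⟩ := ih (W.erase v) (erase_ssubset hv)
  have hlt : ∀ u ∈ W, G.Adj u v →
      indeg (E ∪ G.arcsInto W v) u < indeg (E ∪ G.arcsInto W v) v := fun u hu huv =>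
    calc indeg (E ∪ G.arcsInto W v) u = indeg E u := hE.indeg_union_arcsInto_of_ne huv.ne
      _ ≤ G.degreeIn (W.erase v) u := hE.indeg_le_degreeIn u
      _ < G.degreeIn W u := degreeIn_erase_lt hv huv
      _ ≤ G.degreeIn W v := hmax u hu
      _ = indeg (E ∪ G.arcsInto W v) v := hE.indeg_union_arcsInto_self.symm
  refine ⟨E ∪ G.arcsInto W v, hE.union_arcsInto hv, fun u hu w hw huw => ?_⟩
  by_cases hu' : u = v
  · subst hu'
    exact (hlt w hw huw.symm).ne'
  by_cases hw' : w = v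
  · subst hw'
    exact (hlt u hu huw).ne
  rw [hE.indeg_union_arcsInto_of_ne hu', hE.indeg_union_arcsInto_of_ne hw']
  exact hirr u (mem_erase.2 ⟨hu', hu⟩) w (mem_erase.2 ⟨hw', hw⟩) huw

end SimpleGraph

theorem stmt8 {V : Type*} [DecidableEq V] (G : SimpleGraph V)
    [Fintype G.edgeSet] :
    ∃ E' : Finset (V × V), IsOrientationOf E' G ∧
      ∀ u v : V, G.Adj u v → indeg E' u ≠ indeg E' v := by
  classical
  let W := G.edgeFinset.biUnion Sym2.toFinset
  have hW : ∀ u v, G.Adj u v → u ∈ W := fun u v huv =>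
    mem_biUnion.2 ⟨s(u, v), G.mem_edgeFinset.2 huv, Sym2.mem_toFinset.2 (Sym2.mem_mk_left u v)⟩
  obtain ⟨E, hE, hirr⟩ := G.exists_isOrientationOn_indeg_ne W
  exact ⟨E, hE.isOrientationOf hW, fun u v huv => hirr u (hW u v huv) v (hW v u huv.symm) huv⟩
end

section
/- Every simple graph G admits an orientation in which adjacent vertices have different balanced degrees, where the balanced degree of a vertex v is d^+(v) - d^-(v). -/
open Finset

section

variable {V : Type*} [DecidableEq V]

lemma sum_sq_eq_of_transfer {s : Finset V} {f g : V → ℤ} {u v : V} {c : ℤ}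
    (hu : u ∈ s) (hv : v ∈ s) (hne : u ≠ v) (hgu : g u = f u - c) (hgv : g v = f v + c)
    (hg : ∀ w, w ≠ u → w ≠ v → g w = f w) :
    ∑ x ∈ s, g x ^ 2 = ∑ x ∈ s, f x ^ 2 + 2 * c * (f v - f u) + 2 * c ^ 2 := by
  have hv' : v ∈ s.erase u := mem_erase.2 ⟨hne.symm, hv⟩
  have hrest : ∑ x ∈ (s.erase u).erase v, g x ^ 2 = ∑ x ∈ (s.erase u).erase v, f x ^ 2 :=
    sum_congr rfl fun w hw => by
      rw [hg w (ne_of_mem_erase (mem_of_mem_erase hw)) (ne_of_mem_erase hw)]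
  rw [← add_sum_erase s _ hu, ← add_sum_erase s _ hu, ← add_sum_erase _ _ hv',
    ← add_sum_erase _ _ hv', hrest, hgu, hgv]
  ring

def flipArc (E : Finset (V × V)) (u v : V) : Finset (V × V) :=
  insert (v, u) (E.erase (u, v))

section flipArc

variable {E : Finset (V × V)} {u v : V}

lemma mem_flipArc {a : V × V} :
    a ∈ flipArc E u v ↔ a = (v, u) ∨ a ≠ (u, v) ∧ a ∈ E := by
  simp only [flipArc, mem_insert, mem_erase]

lemma IsOrientationOf.flipArc {G : SimpleGraph V} (h : IsOrientationOf E G) (huv : (u, v) ∈ E) :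
    IsOrientationOf (flipArc E u v) G := by
  have hadj : G.Adj u v := h.1 _ huv
  have hvu : (v, u) ∉ E := (h.2 u v hadj).1 huv
  refine ⟨fun a ha => ?_, fun x y hxy => ?_⟩
  · rcases mem_flipArc.1 ha with rfl | ⟨-, ha⟩
    exacts [hadj.symm, h.1 a ha]
  · have := h.2 x y hxy
    have := hadj.ne
    simp only [mem_flipArc, ne_eq, Prod.ext_iff]
    grind

lemma bdeg_flipArc_left (huv : (u, v) ∈ E) (hvu : (v, u) ∉ E) (hne : u ≠ v) :
    bdeg (flipArc E u v) u = bdeg E u - 2 := by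
  have hout : outdeg (flipArc E u v) u + 1 = outdeg E u := by
    unfold outdeg
    rw [flipArc, filter_insert, if_neg (by simpa using hne.symm), filter_erase,
      card_erase_add_one (by simp [huv])]
  have hin : indeg (flipArc E u v) u = indeg E u + 1 := by
    unfold indeg
    rw [flipArc, filter_insert, if_pos rfl, filter_erase,
      erase_eq_of_notMem (by simp [hne.symm]), card_insert_of_notMem (by simp [hvu])]
  simp only [bdeg]
  omega

lemma bdeg_flipArc_right (huv : (u, v) ∈ E) (hvu : (v, u) ∉ E) (hne : u ≠ v) :
    bdeg (flipArc E u v) v = bdeg E v + 2 := by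
  have hout : outdeg (flipArc E u v) v = outdeg E v + 1 := by
    unfold outdeg
    rw [flipArc, filter_insert, if_pos rfl, filter_erase,
      erase_eq_of_notMem (by simp [hne]), card_insert_of_notMem (by simp [hvu])]
  have hin : indeg (flipArc E u v) v + 1 = indeg E v := by
    unfold indeg
    rw [flipArc, filter_insert, if_neg (by simpa using hne), filter_erase,
      card_erase_add_one (by simp [huv])]
  simp only [bdeg]
  omega

lemma bdeg_flipArc_of_ne {w : V} (hwu : w ≠ u) (hwv : w ≠ v) :
    bdeg (flipArc E u v) w = bdeg E w := by
  have hout : outdeg (flipArc E u v) w = outdeg E w := by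
    unfold outdeg
    rw [flipArc, filter_insert, if_neg (by simpa using hwv.symm), filter_erase,
      erase_eq_of_notMem (by simp [hwu.symm])]
  have hin : indeg (flipArc E u v) w = indeg E w := by
    unfold indeg
    rw [flipArc, filter_insert, if_neg (by simpa using hwu.symm), filter_erase,
      erase_eq_of_notMem (by simp [hwv.symm])]
  rw [bdeg, bdeg, hout, hin]

end flipArc

def edgeEndpoints (G : SimpleGraph V) [Fintype G.edgeSet] : Finset V :=
  G.edgeFinset.biUnion Sym2.toFinset

lemma SimpleGraph.Adj.mem_edgeEndpoints {G : SimpleGraph V} [Fintype G.edgeSet] {u v : V}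
    (h : G.Adj u v) : u ∈ edgeEndpoints G :=
  mem_biUnion.2 ⟨s(u, v), G.mem_edgeFinset.2 h, Sym2.mem_toFinset.2 (Sym2.mem_mk_left u v)⟩

section orientation

variable {G : SimpleGraph V} {E : Finset (V × V)}

lemma IsOrientationOf.mem_or_mem (h : IsOrientationOf E G) {u v : V} (huv : G.Adj u v) :
    (u, v) ∈ E ∨ (v, u) ∈ E := by
  by_contra! hnot
  exact hnot.1 ((h.2 u v huv).2 hnot.2)

lemma IsOrientationOf.subset_product [Fintype G.edgeSet] (h : IsOrientationOf E G) :
    E ⊆ edgeEndpoints G ×ˢ edgeEndpoints G := fun a ha =>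
  mem_product.2 ⟨(h.1 a ha).mem_edgeEndpoints, (h.1 a ha).symm.mem_edgeEndpoints⟩

end orientation

lemma exists_isOrientationOf (G : SimpleGraph V) [Fintype G.edgeSet] :
    ∃ E : Finset (V × V), IsOrientationOf E G := by
  classical
  let _ : LinearOrder V := IsWellOrder.linearOrder WellOrderingRel
  refine ⟨(edgeEndpoints G ×ˢ edgeEndpoints G).filter fun a => G.Adj a.1 a.2 ∧ a.1 < a.2,
    fun a ha => (mem_filter.1 ha).2.1, fun u v huv => ?_⟩
  simp only [mem_filter, mem_product, huv, huv.symm, huv.mem_edgeEndpoints,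
    huv.symm.mem_edgeEndpoints, true_and, not_lt]
  exact ⟨le_of_lt, fun h => lt_of_le_of_ne h huv.ne⟩

lemma IsOrientationOf.bdeg_add_two_le_of_maximal {G : SimpleGraph V} [Fintype G.edgeSet]
    {E : Finset (V × V)} (hE : IsOrientationOf E G)
    (hmax : ∀ F, IsOrientationOf F G →
      ∑ x ∈ edgeEndpoints G, bdeg F x ^ 2 ≤ ∑ x ∈ edgeEndpoints G, bdeg E x ^ 2)
    {u v : V} (huv : (u, v) ∈ E) : bdeg E v + 2 ≤ bdeg E u := by
  have hadj : G.Adj u v := hE.1 _ huv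
  have hvu : (v, u) ∉ E := (hE.2 u v hadj).1 huv
  have hflip := sum_sq_eq_of_transfer hadj.mem_edgeEndpoints hadj.symm.mem_edgeEndpoints hadj.ne
    (bdeg_flipArc_left huv hvu hadj.ne) (bdeg_flipArc_right huv hvu hadj.ne)
    fun w => bdeg_flipArc_of_ne
  have := hmax _ (hE.flipArc huv)
  omega

lemma exists_isOrientationOf_maximizing (G : SimpleGraph V) [Fintype G.edgeSet] :
    ∃ E, IsOrientationOf E G ∧ ∀ F, IsOrientationOf F G →
      ∑ x ∈ edgeEndpoints G, bdeg F x ^ 2 ≤ ∑ x ∈ edgeEndpoints G, bdeg E x ^ 2 := by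
  classical
  let W := edgeEndpoints G
  have mem_candidates {F} (hF : IsOrientationOf F G) :
      F ∈ (W ×ˢ W).powerset.filter (IsOrientationOf · G) :=
    mem_filter.2 ⟨mem_powerset.2 hF.subset_product, hF⟩
  obtain ⟨E₀, hE₀⟩ := exists_isOrientationOf G
  obtain ⟨E, hE, hmax⟩ :=
    exists_max_image _ (fun F => ∑ x ∈ W, bdeg F x ^ 2) ⟨E₀, mem_candidates hE₀⟩
  exact ⟨E, (mem_filter.1 hE).2, fun F hF => hmax F (mem_candidates hF)⟩

end

theorem stmt9 {V : Type*} [DecidableEq V] (G : SimpleGraph V)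
    [Fintype G.edgeSet] :
    ∃ E' : Finset (V × V), IsOrientationOf E' G ∧
      ∀ u v : V, G.Adj u v → bdeg E' u ≠ bdeg E' v := by
  obtain ⟨E, hE, hmax⟩ := exists_isOrientationOf_maximizing G
  refine ⟨E, hE, fun u v huv => ?_⟩
  rcases hE.mem_or_mem huv with h | h <;>
    have := hE.bdeg_add_two_le_of_maximal hmax h <;> omega
end

section
/- If D is an outdegree-decreasing acyclic digraph, then lir(D) ≤ 2. -/
/-!
It suffices to split the arcs into two classes so that along every arc the outdegrees within
its class differ. Peel off a source `u`, split the rest by induction, and split the out-arcs of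
`u` into `m` arcs of class 0 and `d⁺(u) - m` of class 1. An out-neighbour `v`, already split as
`x_v + y_v = d⁺(v) ≤ d⁺(u)`, forbids `m = x_v` if `uv` gets class 0 and `d⁺(u) - m = y_v` if it
gets class 1. Summed over `v`, the forced memberships at the `d⁺(u) + 1` candidate values of `m`
number at most `2 d⁺(u)`, so some `m` has at most one, and `x_v ≤ d⁺(u) - y_v` makes it satisfiable.
-/

open Finset

section Selection

variable {ι : Type*}

lemma exists_card_filter_add_card_filter_lt_two (H : Finset ι) (p q : ι → ℕ)
    (hp : ∀ v ∈ H, p v ≤ #H) (hq : ∀ v ∈ H, q v ≤ #H) :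
    ∃ a ≤ #H, #(H.filter (p · = a)) + #(H.filter (q · = a)) < 2 := by
  have hsum : ∑ a ∈ range (#H + 1), (#(H.filter (p · = a)) + #(H.filter (q · = a)))
      < ∑ _a ∈ range (#H + 1), 2 := by
    rw [sum_add_distrib,
      ← card_eq_sum_card_fiberwise fun v hv => mem_range_succ_iff.2 (hp v hv),
      ← card_eq_sum_card_fiberwise fun v hv => mem_range_succ_iff.2 (hq v hv),
      sum_const, card_range, smul_eq_mul]
    omega
  obtain ⟨a, ha, hlt⟩ := exists_lt_of_sum_lt hsum
  exact ⟨a, mem_range_succ_iff.1 ha, hlt⟩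

lemma exists_subset_card_ne [DecidableEq ι] (H : Finset ι) (p q : ι → ℕ)
    (hpq : ∀ v ∈ H, p v + q v ≤ #H) :
    ∃ A ⊆ H, (∀ v ∈ A, #A ≠ p v) ∧ ∀ v ∈ H \ A, #(H \ A) ≠ q v := by
  obtain ⟨a, haH, hlt⟩ := exists_card_filter_add_card_filter_lt_two H p (#H - q ·)
    (fun v hv => by have := hpq v hv; omega) (fun _ _ => Nat.sub_le _ _)
  -- if `#A = a`, the elements of `X` must stay out of `A` and those of `F` must go in
  set X := H.filter (p · = a)
  set F := H.filter (#H - q · = a)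
  have hdisj : Disjoint F X := by
    refine disjoint_left.2 fun v hvF hvX => ?_
    have := card_pos.2 ⟨v, hvF⟩
    have := card_pos.2 ⟨v, hvX⟩
    omega
  have hFa : #F ≤ a := by
    rcases Nat.eq_zero_or_pos a with rfl | ha
    · have hFX : F ⊆ X := fun v hv => by
        simp only [F, X, mem_filter] at hv ⊢
        exact ⟨hv.1, by have := hpq v hv.1; omega⟩
      have := card_le_card hFX
      omega
    · omega
  have hXa : a + #X ≤ #H := by
    rcases haH.eq_or_lt with rfl | ha
    · have hXF : X ⊆ F := fun v hv => by
        simp only [F, X, mem_filter] at hv ⊢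
        exact ⟨hv.1, by have := hpq v hv.1; omega⟩
      have := card_le_card hXF
      omega
    · omega
  obtain ⟨A, hFA, hAX, hA⟩ := exists_subsuperset_card_eq
    (subset_sdiff.2 ⟨filter_subset _ H, hdisj⟩) hFa
    (by rw [card_sdiff_of_subset (filter_subset _ H)]; change a ≤ #H - #X; omega)
  have hAH : A ⊆ H := hAX.trans sdiff_subset
  refine ⟨A, hAH, fun v hv hpv => ?_, fun v hv hqv => ?_⟩
  · have hvX := mem_sdiff.1 (hAX hv)
    exact hvX.2 (mem_filter.2 ⟨hvX.1, by omega⟩)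
  · have hvH := mem_sdiff.1 hv
    have := card_le_card hAH
    rw [card_sdiff_of_subset hAH] at hqv
    exact hvH.2 (hFA (mem_filter.2 ⟨hvH.1, by omega⟩))

end Selection

section Outdeg

variable {V : Type*} [DecidableEq V]

def OutIrregular (E : Finset (V × V)) : Prop :=
  ∀ a ∈ E, outdeg E a.1 ≠ outdeg E a.2

lemma OutIrregular.weakLI {E : Finset (V × V)} (h : OutIrregular E) : WeakLI E :=
  fun a ha heq => h a ha (congrArg Prod.fst heq)

lemma outdeg_union {C B : Finset (V × V)} (h : Disjoint C B) (w : V) :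
    outdeg (C ∪ B) w = outdeg C w + outdeg B w := by
  rw [outdeg, filter_union, card_union_of_disjoint (disjoint_filter_filter h)]
  rfl

lemma outdeg_eq_zero {B : Finset (V × V)} {w : V} (h : ∀ b ∈ B, b.1 ≠ w) : outdeg B w = 0 := by
  rw [outdeg, card_eq_zero, filter_eq_empty_iff]
  exact h

lemma outdeg_eq_card {B : Finset (V × V)} {w : V} (h : ∀ b ∈ B, b.1 = w) : outdeg B w = #B := by
  rw [outdeg, filter_true_of_mem h]

lemma outdeg_add_outdeg_sdiff {S E : Finset (V × V)} (h : S ⊆ E) (w : V) :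
    outdeg S w + outdeg (E \ S) w = outdeg E w := by
  rw [← outdeg_union disjoint_sdiff, union_sdiff_of_subset h]

lemma OutIrregular.union_of_out_arcs {C B : Finset (V × V)} {u : V} (hC : OutIrregular C)
    (hCu : ∀ c ∈ C, c.1 ≠ u ∧ c.2 ≠ u) (hBu : ∀ b ∈ B, b.1 = u ∧ b.2 ≠ u)
    (hB : ∀ b ∈ B, #B ≠ outdeg C b.2) : OutIrregular (C ∪ B) := by
  have hdisj : Disjoint C B := disjoint_left.2 fun c hc hcB => (hCu c hc).1 (hBu c hcB).1
  have hne : ∀ w ≠ u, outdeg (C ∪ B) w = outdeg C w := fun w hw => by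
    rw [outdeg_union hdisj, outdeg_eq_zero fun b hb hbw => hw (hbw.symm.trans (hBu b hb).1), add_zero]
  have hu : outdeg (C ∪ B) u = #B := by
    rw [outdeg_union hdisj, outdeg_eq_zero fun c hc => (hCu c hc).1,
      outdeg_eq_card fun b hb => (hBu b hb).1, zero_add]
  intro a ha
  rcases mem_union.1 ha with haC | haB
  · rw [hne _ (hCu a haC).1, hne _ (hCu a haC).2]
    exact hC a haC
  · rw [(hBu a haB).1, hu, hne _ (hBu a haB).2]
    exact hB a haB

lemma lirLe_two_of_outIrregular {E S : Finset (V × V)} (hS : S ⊆ E) (h₀ : OutIrregular S)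
    (h₁ : OutIrregular (E \ S)) : lirLe E 2 := by
  refine ⟨fun a => if a ∈ S then 0 else 1, fun i => ?_⟩
  fin_cases i
  · convert h₀.weakLI using 1
    ext a
    by_cases ha : a ∈ S
    · simp [ha, hS ha]
    · simp [ha]
  · convert h₁.weakLI using 1
    ext a
    by_cases ha : a ∈ S <;> simp [ha]

lemma exists_outIrregular_split_union_out_arcs {E T S : Finset (V × V)} {u : V}
    (hEu : ∀ b ∈ E, b.1 ≠ u ∧ b.2 ≠ u) (hTu : ∀ b ∈ T, b.1 = u ∧ b.2 ≠ u)
    (hdeg : ∀ b ∈ T, outdeg E b.2 ≤ #T) (hSE : S ⊆ E) (h₀ : OutIrregular S)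
    (h₁ : OutIrregular (E \ S)) :
    ∃ S' ⊆ E ∪ T, OutIrregular S' ∧ OutIrregular ((E ∪ T) \ S') := by
  obtain ⟨A, hAT, hA₀, hA₁⟩ := exists_subset_card_ne T (fun b => outdeg S b.2)
    (fun b => outdeg (E \ S) b.2) fun b hb => by
      rw [outdeg_add_outdeg_sdiff hSE]
      exact hdeg b hb
  refine ⟨S ∪ A, union_subset_union hSE hAT,
    h₀.union_of_out_arcs (fun b hb => hEu b (hSE hb)) (fun b hb => hTu b (hAT hb)) hA₀, ?_⟩
  have hsdiff : (E ∪ T) \ (S ∪ A) = (E \ S) ∪ (T \ A) := by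
    ext b
    have := hEu b
    have := hTu b
    simp only [mem_sdiff, mem_union]
    grind
  rw [hsdiff]
  exact h₁.union_of_out_arcs (fun b hb => hEu b (mem_sdiff.1 hb).1)
    (fun b hb => hTu b (mem_sdiff.1 hb).1) hA₁

theorem exists_outIrregular_split (E : Finset (V × V)) (r : V → ℕ)
    (hr : ∀ a ∈ E, r a.1 < r a.2) (hdeg : ∀ a ∈ E, outdeg E a.2 ≤ outdeg E a.1) :
    ∃ S ⊆ E, OutIrregular S ∧ OutIrregular (E \ S) := by
  induction E using Finset.strongInduction with
  | H E ih =>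
  rcases E.eq_empty_or_nonempty with rfl | hne
  · exact ⟨∅, subset_refl _, by simp [OutIrregular], by simp [OutIrregular]⟩
  -- the tail `u` of minimal rank is a source; peel off its out-arcs `T`
  obtain ⟨a₀, ha₀, hmin⟩ := E.exists_min_image (fun a => r a.1) hne
  set u := a₀.1
  set E' := E.filter (·.1 ≠ u)
  set T := E.filter (·.1 = u)
  have hsource : ∀ b ∈ E, b.2 ≠ u := fun b hb hbu => by
    have := hr b hb
    have := hmin b hb
    rw [hbu] at *
    omega
  have hE'u : ∀ b ∈ E', b.1 ≠ u ∧ b.2 ≠ u := fun b hb =>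
    ⟨(mem_filter.1 hb).2, hsource b (mem_filter.1 hb).1⟩
  have hTu : ∀ b ∈ T, b.1 = u ∧ b.2 ≠ u := fun b hb =>
    ⟨(mem_filter.1 hb).2, hsource b (mem_filter.1 hb).1⟩
  have hE : E' ∪ T = E := (union_comm _ _).trans (filter_union_filter_not_eq _ E)
  have houtdeg : ∀ w ≠ u, outdeg E' w = outdeg E w := fun w hw => by
    rw [← hE, outdeg_union (disjoint_filter_filter_not _ _ _).symm,
      outdeg_eq_zero fun b hb hbw => hw (hbw.symm.trans (hTu b hb).1), add_zero]
  obtain ⟨S', hS'E', h₀, h₁⟩ := ih E' (filter_ssubset.2 ⟨a₀, ha₀, not_not.2 rfl⟩)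
    (fun b hb => hr b (mem_filter.1 hb).1)
    (fun b hb => by
      rw [houtdeg _ (hE'u b hb).1, houtdeg _ (hE'u b hb).2]
      exact hdeg b (mem_filter.1 hb).1)
  rw [← hE]
  refine exists_outIrregular_split_union_out_arcs hE'u hTu (fun b hb => ?_) hS'E' h₀ h₁
  have := hdeg b (mem_filter.1 hb).1
  rw [(hTu b hb).1] at this
  rwa [houtdeg _ (hTu b hb).2]

end Outdeg

theorem stmt10 {V : Type*} [DecidableEq V] (E : Finset (V × V))
    (hloop : ∀ v : V, (v, v) ∉ E)
    (h : OutdegDecAcyclic E) :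
    lirLe E 2 := by
  obtain ⟨r, hinj, hfwd, hmono⟩ := h
  have hr : ∀ a ∈ E, r a.1 < r a.2 := by
    rintro ⟨x, y⟩ hxy
    refine (hfwd _ hxy).lt_of_ne fun heq => ?_
    obtain rfl : x = y := hinj heq
    exact hloop x hxy
  obtain ⟨S, hSE, h₀, h₁⟩ :=
    exists_outIrregular_split E r hr fun a ha => hmono _ _ (hr a ha)
  exact lirLe_two_of_outIrregular hSE h₀ h₁
end

section
/- Every symmetric digraph D satisfies lir(D) ≤ 2. -/
/-
Order the vertices greedily: repeatedly remove a vertex with the most arcs into the remaining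
set. The forward degree of a vertex (its number of later neighbours) then strictly decreases along
every forward arc `uv`: when `u` was chosen, `v` had at most as many remaining neighbours as `u`,
one of which was `u` itself. Hence the forward arcs form a weak locally irregular digraph, and so
does its reverse, which is the set of backward arcs because `D` is symmetric.
-/

open Finset

section Degrees

variable {V : Type*} [DecidableEq V]

lemma outdeg_lt_outdeg {F G : Finset (V × V)} (h : F ⊆ G) {a : V × V} (ha : a ∈ G)
    (ha' : a ∉ F) : outdeg F a.1 < outdeg G a.1 :=
  card_lt_card ((ssubset_iff_of_subset (filter_subset_filter _ h)).2
    ⟨a, mem_filter.2 ⟨ha, rfl⟩, fun h' => ha' (mem_filter.1 h').1⟩)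

lemma outdeg_image_swap (F : Finset (V × V)) (v : V) :
    outdeg (F.image Prod.swap) v = indeg F v := by
  rw [outdeg, indeg, filter_image, card_image_of_injective _ Prod.swap_injective]
  rfl

lemma indeg_image_swap (F : Finset (V × V)) (v : V) :
    indeg (F.image Prod.swap) v = outdeg F v := by
  rw [outdeg, indeg, filter_image, card_image_of_injective _ Prod.swap_injective]
  rfl

lemma weakLI_of_outdeg_lt {F : Finset (V × V)} (h : ∀ a ∈ F, outdeg F a.2 < outdeg F a.1) :
    WeakLI F := fun a ha heq => (h a ha).ne' (Prod.mk.inj heq).1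

lemma WeakLI.image_swap {F : Finset (V × V)} (hF : WeakLI F) : WeakLI (F.image Prod.swap) := by
  intro a ha heq
  obtain ⟨b, hb, rfl⟩ := mem_image.1 ha
  simp only [outdeg_image_swap, indeg_image_swap, Prod.fst_swap, Prod.snd_swap,
    Prod.mk.injEq] at heq
  exact hF b hb (Prod.ext heq.2.symm heq.1.symm)

end Degrees

section GreedyOrder

variable {V : Type*}

def forwardArcs (E : Finset (V × V)) (r : V → ℕ) : Finset (V × V) :=
  E.filter fun a => r a.1 < r a.2

lemma forwardArcs_subset {E : Finset (V × V)} {r : V → ℕ} : forwardArcs E r ⊆ E :=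
  filter_subset _ _

variable [DecidableEq V]

def arcsInto (E : Finset (V × V)) (T : Finset V) : Finset (V × V) :=
  E.filter fun a => a.2 ∈ T

def consRank (m : V) (r : V → ℕ) (w : V) : ℕ :=
  if w = m then 0 else r w + 1

variable {E : Finset (V × V)} {T : Finset V} {m : V} {r : V → ℕ}

lemma arcsInto_mono {T' : Finset V} (h : T ⊆ T') : arcsInto E T ⊆ arcsInto E T' :=
  monotone_filter_right _ fun _ _ => @h _

lemma image_swap_forwardArcs (hsym : ∀ u v : V, (u, v) ∈ E → (v, u) ∈ E)
    (hr : ∀ a ∈ E, r a.1 ≠ r a.2) :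
    (forwardArcs E r).image Prod.swap = E.filter fun a => ¬ r a.1 < r a.2 := by
  ext ⟨x, y⟩
  simp only [forwardArcs, mem_image, mem_filter, Prod.exists, Prod.swap_prod_mk,
    Prod.mk.injEq, existsAndEq, true_and, exists_eq_right, not_lt]
  constructor
  · rintro ⟨hyx, hlt⟩
    exact ⟨hsym _ _ hyx, hlt.le⟩
  · rintro ⟨hxy, hle⟩
    exact ⟨hsym _ _ hxy, lt_of_le_of_ne hle (hr _ hxy).symm⟩

lemma outdeg_forwardArcs_consRank_self (hloop : ∀ v : V, (v, v) ∉ E) :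
    outdeg (forwardArcs (arcsInto E T) (consRank m r)) m = outdeg (arcsInto E T) m := by
  unfold outdeg forwardArcs
  rw [filter_filter]
  refine congrArg card (filter_congr fun a ha => and_iff_right_of_imp fun hm => ?_)
  have hne : a.2 ≠ m := fun h => by
    obtain rfl : a = (m, m) := Prod.ext hm h
    exact hloop m (mem_filter.1 ha).1
  simp [consRank, hm, hne]

lemma outdeg_forwardArcs_consRank_of_ne {w : V} (hw : w ≠ m) :
    outdeg (forwardArcs (arcsInto E T) (consRank m r)) w =
      outdeg (forwardArcs (arcsInto E (T.erase m)) r) w := by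
  unfold outdeg forwardArcs arcsInto
  simp only [filter_filter]
  refine congrArg card (filter_congr fun a _ => ?_)
  by_cases h2 : a.2 = m
  · simp [consRank, h2]
  · constructor <;> rintro ⟨⟨hT, hlt⟩, rfl⟩ <;> simp_all [consRank]

theorem exists_rank_outdeg_forwardArcs_lt (hloop : ∀ v : V, (v, v) ∉ E)
    (hsym : ∀ u v : V, (u, v) ∈ E → (v, u) ∈ E) (T : Finset V) :
    ∃ r : V → ℕ, Set.InjOn r T ∧ ∀ u ∈ T, ∀ v ∈ T, (u, v) ∈ E → r u < r v →
      outdeg (forwardArcs (arcsInto E T) r) v < outdeg (forwardArcs (arcsInto E T) r) u := by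
  induction T using Finset.strongInduction with
  | H T ih =>
  rcases T.eq_empty_or_nonempty with rfl | hT
  · exact ⟨fun _ => 0, by simp, by simp⟩
  obtain ⟨m, hmT, hmax⟩ := T.exists_max_image (outdeg (arcsInto E T)) hT
  obtain ⟨r, hr_inj, hr⟩ := ih _ (erase_ssubset hmT)
  refine ⟨consRank m r, ?_, ?_⟩
  · intro x hx y hy hxy
    by_cases hxm : x = m <;> by_cases hym : y = m <;>
      simp_all [consRank, hr_inj (mem_erase.2 ⟨_, hx⟩) (mem_erase.2 ⟨_, hy⟩)]
  intro u hu v hv huv hlt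
  have hvm : v ≠ m := by rintro rfl; simp [consRank] at hlt
  rw [outdeg_forwardArcs_consRank_of_ne hvm]
  by_cases hum : u = m
  · subst hum
    rw [outdeg_forwardArcs_consRank_self hloop]
    -- the arc `vu` counts towards the degree of `v` into `T` but not into `T.erase u`
    calc outdeg (forwardArcs (arcsInto E (T.erase u)) r) v
        < outdeg (arcsInto E T) v :=
          outdeg_lt_outdeg (forwardArcs_subset.trans (arcsInto_mono (erase_subset _ _)))
            (a := (v, u)) (mem_filter.2 ⟨hsym u v huv, hu⟩) (by simp [forwardArcs, arcsInto])
      _ ≤ outdeg (arcsInto E T) u := hmax v hv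
  · rw [outdeg_forwardArcs_consRank_of_ne hum]
    exact hr u (mem_erase.2 ⟨hum, hu⟩) v (mem_erase.2 ⟨hvm, hv⟩) huv
      (by simpa [consRank, hum, hvm] using hlt)

end GreedyOrder

theorem stmt13 {V : Type*} [DecidableEq V] (E : Finset (V × V))
    (hloop : ∀ v : V, (v, v) ∉ E)
    (hsym : ∀ u v : V, (u, v) ∈ E → (v, u) ∈ E) :
    lirLe E 2 := by
  set S := E.image Prod.fst
  have hS : ∀ a ∈ E, a.1 ∈ S ∧ a.2 ∈ S := fun a ha =>
    ⟨mem_image_of_mem _ ha, mem_image.2 ⟨_, hsym _ _ ha, rfl⟩⟩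
  obtain ⟨r, hr_inj, hr⟩ := exists_rank_outdeg_forwardArcs_lt hloop hsym S
  rw [show arcsInto E S = E from filter_true_of_mem fun a ha => (hS a ha).2] at hr
  have hr_ne : ∀ a ∈ E, r a.1 ≠ r a.2 := fun a ha heq => hloop a.1 (by
    convert ha using 1
    exact Prod.ext rfl (hr_inj (hS a ha).1 (hS a ha).2 heq))
  have hF : WeakLI (forwardArcs E r) := weakLI_of_outdeg_lt fun a ha => by
    obtain ⟨haE, hlt⟩ := mem_filter.1 ha
    exact hr _ (hS a haE).1 _ (hS a haE).2 haE hlt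
  refine ⟨fun a => if r a.1 < r a.2 then 0 else 1, fun i => ?_⟩
  fin_cases i
  · convert hF using 1
    simp [forwardArcs]
  · convert hF.image_swap using 1
    rw [image_swap_forwardArcs hsym hr_ne]
    simp
end

section
/- For every integer k ≥ 2 and every digraph D, there is an assignment c : E(D) → {1, k} such that the function φ(v) = Σ_{vx ∈ E(D)} c(vx) − Σ_{yv ∈ E(D)} c(yv) satisfies φ(u) ≠ φ(v) for every arc uv of D. -/
/-! Among the weightings with values in `{x, y}`, take one maximizing the energy `∑ᵥ φ(v)²`.
If an arc `uv` had `φ(u) = φ(v)`, changing its weight by `δ = ±(y - x)` would shift `φ(u)` by `δ`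
and `φ(v)` by `-δ`, raising the energy by `2δ² > 0`. -/

namespace ArcWeighting

variable {V R : Type*} [DecidableEq V] [CommRing R]

def netFlow (E : Finset (V × V)) (c : V × V → R) (v : V) : R :=
  (∑ b ∈ E with b.1 = v, c b) - ∑ b ∈ E with b.2 = v, c b

lemma netFlow_add (E : Finset (V × V)) (c c' : V × V → R) (v : V) :
    netFlow E (c + c') v = netFlow E c v + netFlow E c' v := by
  simp only [netFlow, Pi.add_apply, Finset.sum_add_distrib]
  ring

lemma netFlow_single {E : Finset (V × V)} {a : V × V} (ha : a ∈ E) (δ : R) (v : V) :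
    netFlow E (Pi.single a δ) v = (if a.1 = v then δ else 0) - (if a.2 = v then δ else 0) := by
  simp [netFlow, Finset.sum_pi_single', ha]

def energy (W : Finset V) (E : Finset (V × V)) (c : V × V → R) : R :=
  ∑ v ∈ W, netFlow E c v ^ 2

lemma energy_add_single {W : Finset V} {E : Finset (V × V)} {a : V × V} (ha : a ∈ E)
    (h₁ : a.1 ∈ W) (h₂ : a.2 ∈ W) (hloop : a.1 ≠ a.2) (c : V × V → R) (δ : R) :
    energy W E (c + Pi.single a δ) =
      energy W E c + 2 * δ * (netFlow E c a.1 - netFlow E c a.2 + δ) := by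
  have hpoint : ∀ v, netFlow E (c + Pi.single a δ) v ^ 2 = netFlow E c v ^ 2 +
      ((if a.1 = v then 2 * δ * netFlow E c v + δ ^ 2 else 0) +
        (if a.2 = v then -2 * δ * netFlow E c v + δ ^ 2 else 0)) := by
    intro v
    rw [netFlow_add, netFlow_single ha]
    by_cases hv₁ : a.1 = v <;> by_cases hv₂ : a.2 = v
    · exact absurd (hv₁.trans hv₂.symm) hloop
    all_goals simp only [hv₁, hv₂, if_true, if_false]; ring
  simp only [energy, hpoint, Finset.sum_add_distrib, Finset.sum_ite_eq, h₁, h₂, if_true]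
  ring

def weighting (x y : R) (S : Finset (V × V)) (b : V × V) : R :=
  if b ∈ S then y else x

lemma weighting_symmDiff_singleton (x y : R) (S : Finset (V × V)) (a : V × V) :
    weighting x y (symmDiff S {a}) =
      weighting x y S + Pi.single a (if a ∈ S then x - y else y - x) := by
  funext b
  by_cases hb : b = a
  · subst hb
    by_cases hS : b ∈ S <;> simp [weighting, Finset.mem_symmDiff, hS]
  · simp [weighting, Finset.mem_symmDiff, hb]

variable [LinearOrder R] [IsStrictOrderedRing R]

theorem exists_weighting_netFlow_ne {E : Finset (V × V)} (hloop : ∀ v, (v, v) ∉ E)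
    {x y : R} (hxy : x ≠ y) :
    ∃ S ⊆ E, ∀ a ∈ E, netFlow E (weighting x y S) a.1 ≠ netFlow E (weighting x y S) a.2 := by
  set W : Finset V := E.image Prod.fst ∪ E.image Prod.snd
  obtain ⟨S, hSE, hmax⟩ := E.powerset.exists_max_image (fun S => energy W E (weighting x y S))
    ⟨∅, Finset.empty_mem_powerset E⟩
  refine ⟨S, Finset.mem_powerset.mp hSE, fun a ha heq => ?_⟩
  have hne : a.1 ≠ a.2 := by
    rcases a with ⟨u, v⟩
    intro (h : u = v)
    exact hloop u (h ▸ ha)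
  set δ : R := if a ∈ S then x - y else y - x
  have hδ : δ ≠ 0 := by
    unfold δ
    split_ifs <;> simp [sub_eq_zero, hxy, hxy.symm]
  have hflip : symmDiff S {a} ∈ E.powerset := Finset.mem_powerset.mpr
    (symmDiff_le_sup.trans (Finset.union_subset (Finset.mem_powerset.mp hSE)
      (Finset.singleton_subset_iff.mpr ha)))
  have hgain := energy_add_single ha (Finset.mem_union_left _ (Finset.mem_image_of_mem _ ha))
    (Finset.mem_union_right _ (Finset.mem_image_of_mem _ ha)) hne (weighting x y S) δ
  have hle := hmax _ hflip
  rw [weighting_symmDiff_singleton, hgain, heq, sub_self, zero_add] at hle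
  nlinarith [mul_self_pos.mpr hδ]

end ArcWeighting

theorem stmt18 {V : Type*} [DecidableEq V] (E : Finset (V × V))
    (hloop : ∀ v : V, (v, v) ∉ E) (k : ℕ) (hk : 2 ≤ k) :
    ∃ c : V × V → ℤ,
      (∀ a ∈ E, c a = 1 ∨ c a = (k : ℤ)) ∧
      ∀ a ∈ E,
        ((∑ b ∈ E.filter fun b => b.1 = a.1, c b) -
            ∑ b ∈ E.filter fun b => b.2 = a.1, c b) ≠
        ((∑ b ∈ E.filter fun b => b.1 = a.2, c b) -
            ∑ b ∈ E.filter fun b => b.2 = a.2, c b) := by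
  have h1k : (1 : ℤ) ≠ k := by omega
  obtain ⟨S, -, hS⟩ := ArcWeighting.exists_weighting_netFlow_ne hloop h1k
  refine ⟨ArcWeighting.weighting 1 k S, fun a _ => ?_, hS⟩
  unfold ArcWeighting.weighting
  split_ifs <;> simp
end
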